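/- Suppose the finite collection (W1,W2,X1^N,X2^N,Z^N) satisfies: (W1,W2) → (X1^N,X2^N) → Z^N is a Markov chain, H(W1|X1^N) = 0, H(W2|X2^N) = 0, X1^N independent of X2^N, (1/N)H(X1^N) ≥ R1 + R1* − ε1, (1/N)H(X2^N) ≥ R2 + R2* − ε2, (1/N)I(X1^N,X2^N;Z^N) = I(X1,X2;Z) (single-letter value), (1/N)H(X1^N,X2^N|W1,W2,Z^N) ≤ ε3, and R1* + R2* = I(X1,X2;Z). Then (1/N)H(W1,W2|Z^N) ≥ R1 + R2 − ε1 − ε2 − ε3. -/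

import Mathlib

open MeasureTheory Real

noncomputable def pr {Ω : Type*} [MeasurableSpace Ω] (μ : Measure Ω) (s : Set Ω) : ℝ :=
  (μ s).toReal

/-- Shannon entropy of a finitely-valued random variable. -/
noncomputable def ent {Ω : Type*} [MeasurableSpace Ω] (μ : Measure Ω)
    {α : Type*} [Fintype α] (X : Ω → α) : ℝ :=
  -∑ a : α, pr μ (X ⁻¹' {a}) * Real.log (pr μ (X ⁻¹' {a}))

/-- Conditional Shannon entropy H(X|Y) = H(X,Y) - H(Y). -/
noncomputable def condEnt {Ω : Type*} [MeasurableSpace Ω] (μ : Measure Ω)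
    {α β : Type*} [Fintype α] [Fintype β] (X : Ω → α) (Y : Ω → β) : ℝ :=
  ent μ (fun ω => (X ω, Y ω)) - ent μ Y

/-- Mutual information I(X;Y) = H(X) + H(Y) - H(X,Y). -/
noncomputable def mi {Ω : Type*} [MeasurableSpace Ω] (μ : Measure Ω)
    {α β : Type*} [Fintype α] [Fintype β] (X : Ω → α) (Y : Ω → β) : ℝ :=
  ent μ X + ent μ Y - ent μ (fun ω => (X ω, Y ω))

/-- Conditional mutual information I(X;Y|Z). -/
noncomputable def cmi {Ω : Type*} [MeasurableSpace Ω] (μ : Measure Ω)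
    {α β γ : Type*} [Fintype α] [Fintype β] [Fintype γ]
    (X : Ω → α) (Y : Ω → β) (Z : Ω → γ) : ℝ :=
  condEnt μ X Z + condEnt μ Y Z - condEnt μ (fun ω => (X ω, Y ω)) Z

/-- Independence of two random variables. -/
def IndepRV {Ω : Type*} [MeasurableSpace Ω] (μ : Measure Ω)
    {α β : Type*} (X : Ω → α) (Y : Ω → β) : Prop :=
  ∀ a b, μ (X ⁻¹' {a} ∩ Y ⁻¹' {b}) = μ (X ⁻¹' {a}) * μ (Y ⁻¹' {b})

/-- X and Y are conditionally independent given Z (Markov chain X → Z → Y). -/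
def CondIndepRV {Ω : Type*} [MeasurableSpace Ω] (μ : Measure Ω)
    {α β γ : Type*} (X : Ω → α) (Y : Ω → β) (Z : Ω → γ) : Prop :=
  ∀ a b c, μ (X ⁻¹' {a} ∩ Y ⁻¹' {b} ∩ Z ⁻¹' {c}) * μ (Z ⁻¹' {c}) =
    μ (X ⁻¹' {a} ∩ Z ⁻¹' {c}) * μ (Y ⁻¹' {b} ∩ Z ⁻¹' {c})

/-- Mutual independence of three random variables. -/
def Indep3RV {Ω : Type*} [MeasurableSpace Ω] (μ : Measure Ω)
    {α β γ : Type*} (X : Ω → α) (Y : Ω → β) (Z : Ω → γ) : Prop :=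
  (∀ a b c, μ (X ⁻¹' {a} ∩ Y ⁻¹' {b} ∩ Z ⁻¹' {c}) =
    μ (X ⁻¹' {a}) * μ (Y ⁻¹' {b}) * μ (Z ⁻¹' {c})) ∧
  IndepRV μ X Y ∧ IndepRV μ X Z ∧ IndepRV μ Y Z

/-!
Writing `X = (X1N, X2N)` and `W = (W1, W2)`, the chain rule gives
`H(W|Z) ≥ H(X|Z) - H(X|W,Z) = H(X) - I(X;Z) - H(X|W,Z)`, and independence of the two codewords
gives `H(X) ≥ H(X1N) + H(X2N)`. Dividing by `N`, the rate bounds on `H(X1N)` and `H(X2N)` pay for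
`I(X;Z)/N = R1s + R2s`, and what is left is `R1 + R2 - ε1 - ε2 - ε3`.
-/

namespace Real

theorem negMulLog_le_sum_negMulLog_of_le_sum {ι : Type*} [Fintype ι] {q : ℝ} {p : ι → ℝ}
    (hq0 : 0 ≤ q) (hq1 : q ≤ 1) (hp0 : ∀ i, 0 ≤ p i) (hpq : ∀ i, p i ≤ q)
    (hq : q ≤ ∑ i, p i) :
    negMulLog q ≤ ∑ i, negMulLog (p i) := by
  have hlog : 0 ≤ -log q := neg_nonneg.mpr (log_nonpos hq0 hq1)
  calc negMulLog q = q * -log q := by rw [negMulLog, neg_mul, mul_neg]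
    _ ≤ (∑ i, p i) * -log q := mul_le_mul_of_nonneg_right hq hlog
    _ = ∑ i, p i * -log q := Finset.sum_mul ..
    _ ≤ ∑ i, negMulLog (p i) := by
        refine Finset.sum_le_sum fun i _ => ?_
        rcases (hp0 i).eq_or_lt with hpi | hpi
        · simp [← hpi]
        · rw [negMulLog, neg_mul, ← mul_neg]
          exact mul_le_mul_of_nonneg_left (neg_le_neg (log_le_log hpi (hpq i))) hpi.le

end Real

section Entropy

variable {Ω : Type*} [MeasurableSpace Ω] (μ : Measure Ω)
  {α β γ : Type*} [Fintype α] [Fintype β] [Fintype γ]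

theorem pr_nonneg (s : Set Ω) : 0 ≤ pr μ s := ENNReal.toReal_nonneg

theorem pr_le_one [IsProbabilityMeasure μ] (s : Set Ω) : pr μ s ≤ 1 :=
  ENNReal.toReal_le_of_le_ofReal zero_le_one (by simpa using prob_le_one)

theorem pr_mono [IsFiniteMeasure μ] {s t : Set Ω} (h : s ⊆ t) : pr μ s ≤ pr μ t :=
  ENNReal.toReal_mono (measure_ne_top μ t) (measure_mono h)

theorem pr_le_sum_of_subset_iUnion [IsFiniteMeasure μ] {ι : Type*} [Fintype ι] {s : Set Ω}
    (f : ι → Set Ω) (h : s ⊆ ⋃ i, f i) : pr μ s ≤ ∑ i, pr μ (f i) := by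
  simp only [pr]
  rw [← ENNReal.toReal_sum fun i _ => measure_ne_top μ (f i)]
  exact ENNReal.toReal_mono (ENNReal.sum_ne_top.mpr fun i _ => measure_ne_top μ _)
    ((measure_mono h).trans (measure_iUnion_fintype_le μ f))

-- Random variables are not assumed measurable, so `μ` is only subadditive on their fibres and
-- this sum may exceed `1`; the entropy inequalities below are arranged to need only this bound.
theorem one_le_sum_pr_preimage_singleton [IsProbabilityMeasure μ] (X : Ω → α) :
    1 ≤ ∑ a, pr μ (X ⁻¹' {a}) := by
  have h := pr_le_sum_of_subset_iUnion μ (s := Set.univ) (fun a => X ⁻¹' {a})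
    fun ω _ => Set.mem_iUnion.mpr ⟨X ω, rfl⟩
  simpa [pr] using h

theorem ent_eq_sum_negMulLog (X : Ω → α) :
    ent μ X = ∑ a, Real.negMulLog (pr μ (X ⁻¹' {a})) := by
  simp [ent, Real.negMulLog, ← Finset.sum_neg_distrib]

theorem ent_nonneg [IsProbabilityMeasure μ] (X : Ω → α) : 0 ≤ ent μ X := by
  rw [ent_eq_sum_negMulLog]
  exact Finset.sum_nonneg fun a _ => Real.negMulLog_nonneg (pr_nonneg μ _) (pr_le_one μ _)

theorem ent_comp_of_injective (X : Ω → α) {f : α → β} (hf : Function.Injective f) :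
    ent μ (fun ω => f (X ω)) = ent μ X := by
  rw [ent_eq_sum_negMulLog, ent_eq_sum_negMulLog]
  refine (Fintype.sum_of_injective f hf _ _ (fun b hb => ?_) fun a => ?_).symm
  · have hempty : (fun ω => f (X ω)) ⁻¹' {b} = ∅ :=
      Set.eq_empty_of_forall_notMem fun ω hω => hb ⟨X ω, hω⟩
    simp [hempty, pr]
  · have hfibre : (fun ω => f (X ω)) ⁻¹' {f a} = X ⁻¹' {a} := by
      ext ω; simp [hf.eq_iff]
    rw [hfibre]

theorem ent_le_ent_pair [IsProbabilityMeasure μ] (X : Ω → α) (Y : Ω → β) :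
    ent μ Y ≤ ent μ (fun ω => (X ω, Y ω)) := by
  rw [ent_eq_sum_negMulLog, ent_eq_sum_negMulLog, Fintype.sum_prod_type, Finset.sum_comm]
  refine Finset.sum_le_sum fun b _ => ?_
  refine Real.negMulLog_le_sum_negMulLog_of_le_sum (pr_nonneg μ _) (pr_le_one μ _)
    (fun _ => pr_nonneg μ _) (fun _ => pr_mono μ fun ω hω => ?_) ?_
  · simp only [Set.mem_preimage, Set.mem_singleton_iff, Prod.mk.injEq] at hω ⊢
    exact hω.2
  · refine pr_le_sum_of_subset_iUnion μ _ fun ω hω => Set.mem_iUnion.mpr ⟨X ω, ?_⟩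
    simpa using hω

theorem ent_comp_le [IsProbabilityMeasure μ] (X : Ω → α) (g : α → β) :
    ent μ (fun ω => g (X ω)) ≤ ent μ X :=
  calc ent μ (fun ω => g (X ω)) ≤ ent μ (fun ω => (X ω, g (X ω))) :=
        ent_le_ent_pair μ X (fun ω => g (X ω))
    _ = ent μ X :=
        ent_comp_of_injective μ X (f := fun a => (a, g a)) fun _ _ h => congrArg Prod.fst h

theorem condEnt_comp_right_of_injective (X : Ω → α) (Y : Ω → β) {f : β → γ}
    (hf : Function.Injective f) :
    condEnt μ X (fun ω => f (Y ω)) = condEnt μ X Y := by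
  have hpair := ent_comp_of_injective μ (fun ω => (X ω, Y ω)) (f := Prod.map id f)
    (Function.injective_id.prodMap hf)
  simp only [condEnt, Prod.map_apply, id_eq] at hpair ⊢
  rw [hpair, ent_comp_of_injective μ Y hf]

theorem ent_add_ent_le_ent_pair [IsProbabilityMeasure μ] {X : Ω → α} {Y : Ω → β}
    (h : IndepRV μ X Y) : ent μ X + ent μ Y ≤ ent μ (fun ω => (X ω, Y ω)) := by
  have hpr (a : α) (b : β) : pr μ ((fun ω => (X ω, Y ω)) ⁻¹' {(a, b)}) =
      pr μ (X ⁻¹' {a}) * pr μ (Y ⁻¹' {b}) := by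
    have hfibre : (fun ω => (X ω, Y ω)) ⁻¹' {(a, b)} = X ⁻¹' {a} ∩ Y ⁻¹' {b} := by
      ext ω; simp
    rw [pr, hfibre, h a b, ENNReal.toReal_mul, pr, pr]
  have hsplit : ent μ (fun ω => (X ω, Y ω)) =
      (∑ b, pr μ (Y ⁻¹' {b})) * ent μ X + (∑ a, pr μ (X ⁻¹' {a})) * ent μ Y := by
    simp only [ent_eq_sum_negMulLog μ (fun ω => (X ω, Y ω)), Fintype.sum_prod_type, hpr,
      Real.negMulLog_mul, Finset.sum_add_distrib, ← Finset.sum_mul, ← Finset.mul_sum,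
      ent_eq_sum_negMulLog μ X, ent_eq_sum_negMulLog μ Y]
  rw [hsplit]
  gcongr
  · exact le_mul_of_one_le_left (ent_nonneg μ X) (one_le_sum_pr_preimage_singleton μ Y)
  · exact le_mul_of_one_le_left (ent_nonneg μ Y) (one_le_sum_pr_preimage_singleton μ X)

theorem ent_sub_mi_sub_condEnt_le_condEnt [IsProbabilityMeasure μ]
    (X : Ω → α) (W : Ω → β) (Z : Ω → γ) :
    ent μ X - mi μ X Z - condEnt μ X (fun ω => (W ω, Z ω)) ≤ condEnt μ W Z := by
  have hmono : ent μ (fun ω => (X ω, Z ω)) ≤ ent μ (fun ω => (X ω, W ω, Z ω)) :=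
    ent_comp_le μ (fun ω => (X ω, W ω, Z ω)) fun p => (p.1, p.2.2)
  simp only [mi, condEnt]
  linarith

end Entropy

theorem stmt16_general {Ω : Type*} [MeasurableSpace Ω] (μ : Measure Ω) [IsProbabilityMeasure μ]
    {α β γ1 γ2 δ : Type*} [Fintype α] [Fintype β] [Fintype γ1] [Fintype γ2] [Fintype δ]
    (W1 : Ω → α) (W2 : Ω → β) (X1N : Ω → γ1) (X2N : Ω → γ2) (ZN : Ω → δ)
    (N R1 R2 R1s R2s ε1 ε2 ε3 c : ℝ) (hN : 0 < N)
    (hInd : IndepRV μ X1N X2N)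
    (h1 : ent μ X1N / N ≥ R1 + R1s - ε1)
    (h2 : ent μ X2N / N ≥ R2 + R2s - ε2)
    (h3 : mi μ (fun ω => (X1N ω, X2N ω)) ZN / N = c)
    (h4 : condEnt μ (fun ω => (X1N ω, X2N ω)) (fun ω => (W1 ω, W2 ω, ZN ω)) / N ≤ ε3)
    (h5 : R1s + R2s = c) :
    condEnt μ (fun ω => (W1 ω, W2 ω)) ZN / N ≥ R1 + R2 - ε1 - ε2 - ε3 := by
  have hchain := ent_sub_mi_sub_condEnt_le_condEnt μ (fun ω => (X1N ω, X2N ω))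
    (fun ω => (W1 ω, W2 ω)) ZN
  have hassoc := condEnt_comp_right_of_injective μ (fun ω => (X1N ω, X2N ω))
    (fun ω => ((W1 ω, W2 ω), ZN ω)) (f := fun p => (p.1.1, p.1.2, p.2))
    fun p q h => by simpa [Prod.ext_iff, and_assoc] using h
  have hindep := ent_add_ent_le_ent_pair μ hInd
  rw [ge_iff_le, le_div_iff₀ hN] at h1 h2 ⊢
  rw [div_eq_iff hN.ne'] at h3
  rw [div_le_iff₀ hN, hassoc] at h4
  subst h5
  linarith

/-- the equivocation-analysis calculation in the DF achievability proof. -/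
theorem stmt16 {Ω : Type*} [MeasurableSpace Ω] (μ : Measure Ω) [IsProbabilityMeasure μ]
    {α β γ1 γ2 δ : Type*} [Fintype α] [Fintype β] [Fintype γ1] [Fintype γ2] [Fintype δ]
    (W1 : Ω → α) (W2 : Ω → β) (X1N : Ω → γ1) (X2N : Ω → γ2) (ZN : Ω → δ)
    (N R1 R2 R1s R2s ε1 ε2 ε3 c : ℝ) (hN : 0 < N)
    (hR1 : 0 ≤ R1) (hR2 : 0 ≤ R2) (hR1s : 0 ≤ R1s) (hR2s : 0 ≤ R2s)
    (hε1 : 0 ≤ ε1) (hε2 : 0 ≤ ε2) (hε3 : 0 ≤ ε3) (hc : 0 ≤ c)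
    (hMarkov : CondIndepRV μ (fun ω => (W1 ω, W2 ω)) ZN (fun ω => (X1N ω, X2N ω)))
    (hW1 : condEnt μ W1 X1N = 0) (hW2 : condEnt μ W2 X2N = 0)
    (hInd : IndepRV μ X1N X2N)
    (h1 : ent μ X1N / N ≥ R1 + R1s - ε1)
    (h2 : ent μ X2N / N ≥ R2 + R2s - ε2)
    (h3 : mi μ (fun ω => (X1N ω, X2N ω)) ZN / N = c)
    (h4 : condEnt μ (fun ω => (X1N ω, X2N ω)) (fun ω => (W1 ω, W2 ω, ZN ω)) / N ≤ ε3)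
    (h5 : R1s + R2s = c) :
    condEnt μ (fun ω => (W1 ω, W2 ω)) ZN / N ≥ R1 + R2 - ε1 - ε2 - ε3 :=
  stmt16_general μ W1 W2 X1N X2N ZN N R1 R2 R1s R2s ε1 ε2 ε3 c hN hInd h1 h2 h3 h4 h5
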